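/- arXiv:1710.09417 — 4 statements merged into one kernel-verified Lean document; each statement's English description precedes it below -/
import Mathlib

section
/- If f is a valid assignment, then the set S_f = {(a, f(a)) : a ∈ A} is a stable (independent) set of the associated graph G, and its weight satisfies z(S_f) = M·n_A − w(f). -/
/-- The associated graph of a `K`-Matching instance: vertices are pairs `(a, j)` with
`j ∈ P a`; distinct vertices `(a,j)`, `(a',j')` are adjacent iff `a = a'` or
(`a ≠ a'` and) `j ∩ j' ≠ ∅`. -/
def kmGraph {A B : Type*} [DecidableEq B] (P : A → Finset (Finset B)) :
    SimpleGraph {v : A × Finset B // v.2 ∈ P v.1} where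
  Adj v w := v ≠ w ∧ (v.1.1 = w.1.1 ∨ (v.1.2 ∩ w.1.2).Nonempty)
  symm := ⟨by
    rintro v w ⟨h1, h2⟩
    refine ⟨h1.symm, ?_⟩
    rcases h2 with h | h
    · exact Or.inl h.symm
    · exact Or.inr (by rwa [Finset.inter_comm])⟩
  loopless := ⟨fun v h => h.1 rfl⟩

section Assignment

variable {A B : Type*} {P : A → Finset (Finset B)} {f : A → Finset B}

def assignmentVertex (hfP : ∀ a, f a ∈ P a) (a : A) : {v : A × Finset B // v.2 ∈ P v.1} :=
  ⟨(a, f a), hfP a⟩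

theorem assignmentVertex_injective (hfP : ∀ a, f a ∈ P a) :
    Function.Injective (assignmentVertex hfP) :=
  fun _ _ h => congrArg (fun v => v.1.1) h

theorem not_adj_assignmentVertex [DecidableEq B] (hfP : ∀ a, f a ∈ P a)
    (hfd : ∀ a₁ a₂ : A, a₁ ≠ a₂ → f a₁ ∩ f a₂ = ∅) (a b : A) :
    ¬ (kmGraph P).Adj (assignmentVertex hfP a) (assignmentVertex hfP b) := by
  rintro ⟨hne, hsame | hmeet⟩
  · exact hne (congrArg (assignmentVertex hfP) hsame)
  · have hab : a ≠ b := fun h => hne (congrArg (assignmentVertex hfP) h)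
    exact Finset.not_nonempty_empty (hfd a b hab ▸ hmeet)

end Assignment

theorem stmt_1_general {A B : Type*} [Fintype A] [DecidableEq A] [DecidableEq B]
    (P : A → Finset (Finset B))
    (w : A → Finset B → ℝ)
    (f : A → Finset B)
    (hfP : ∀ a, f a ∈ P a)
    (hfd : ∀ a₁ a₂ : A, a₁ ≠ a₂ → f a₁ ∩ f a₂ = ∅)
    (M : ℝ)
    (S : Finset {v : A × Finset B // v.2 ∈ P v.1})
    (hS : S = Finset.univ.image
      (fun a => (⟨(a, f a), hfP a⟩ : {v : A × Finset B // v.2 ∈ P v.1}))) :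
    (∀ u ∈ S, ∀ v ∈ S, ¬ (kmGraph P).Adj u v) ∧
      ∑ v ∈ S, (M - w v.1.1 v.1.2) = M * (Fintype.card A : ℝ) - ∑ a, w a (f a) := by
  replace hS : S = Finset.univ.image (assignmentVertex hfP) := hS
  subst hS
  refine ⟨?_, ?_⟩
  · intro u hu v hv
    obtain ⟨a, -, rfl⟩ := Finset.mem_image.1 hu
    obtain ⟨b, -, rfl⟩ := Finset.mem_image.1 hv
    exact not_adj_assignmentVertex hfP hfd a b
  · rw [Finset.sum_image fun a _ b _ h => assignmentVertex_injective hfP h,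
      Finset.sum_sub_distrib, Finset.sum_const, Finset.card_univ, nsmul_eq_mul, mul_comm]
    rfl

/-- for a valid assignment `f`, the set `S_f = {(a, f a) : a ∈ A}` is a
stable set of the associated graph and `z(S_f) = M·n_A − w(f)`. -/
theorem stmt_1 {A B : Type*} [Fintype A] [DecidableEq A] [DecidableEq B]
    (K : ℕ) (P : A → Finset (Finset B))
    (hPK : ∀ a, ∀ j ∈ P a, j.card ≤ K)
    (w : A → Finset B → ℝ) (hw : ∀ a, ∀ j ∈ P a, 0 ≤ w a j)
    (f : A → Finset B)
    (hfP : ∀ a, f a ∈ P a)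
    (hfd : ∀ a₁ a₂ : A, a₁ ≠ a₂ → f a₁ ∩ f a₂ = ∅)
    (M : ℝ) (hM : M = ∑ a, ∑ j ∈ P a, w a j)
    (S : Finset {v : A × Finset B // v.2 ∈ P v.1})
    (hS : S = Finset.univ.image
      (fun a => (⟨(a, f a), hfP a⟩ : {v : A × Finset B // v.2 ∈ P v.1}))) :
    (∀ u ∈ S, ∀ v ∈ S, ¬ (kmGraph P).Adj u v) ∧
      ∑ v ∈ S, (M - w v.1.1 v.1.2) = M * (Fintype.card A : ℝ) - ∑ a, w a (f a) :=
  stmt_1_general P w f hfP hfd M S hS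
end

section
/- Let M₁ ⊆ 𝒜₁ and M₂ ⊆ 𝒜₂ be perfect matchings with M₁ ∩ M₂ = ∅. Define f on A by f((r,s)) = {p^i_r, q^i_s} if (p_r, q_s) ∈ M_i (i ∈ {1,2}), and f((r,s)) = {z_{rs}, z'_{rs}} if (p_r, q_s) ∉ M₁ ∪ M₂. Then f is a valid assignment of the constructed 2-matching instance (f((r,s)) ∈ P_{(r,s)} for all (r,s) ∈ A and distinct elements of A receive disjoint sets), and its weight satisfies w(f) = |𝒜₁ \ M₁| + |𝒜₂ \ M₂| = |𝒜₁| + |𝒜₂| − 2n = t. -/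
/-- The ground set `B` of the constructed 2-matching instance: elements `p^i_r`
(left summand), `q^i_s` (middle summand), and `z_{rs}, z'_{rs}` (right summand,
indexed by a pair and a tag in `Fin 2`). -/
abbrev DMB (n : ℕ) := (Fin 2 × Fin n) ⊕ ((Fin 2 × Fin n) ⊕ ((Fin n × Fin n) × Fin 2))

/-- The candidate set `{p^i_r, q^i_s}` for the pair `a = (r, s)`. -/
def pqSet {n : ℕ} (i : Fin 2) (a : Fin n × Fin n) : Finset (DMB n) :=
  {Sum.inl (i, a.1), Sum.inr (Sum.inl (i, a.2))}

/-- The candidate set `{z_{rs}, z'_{rs}}` for the pair `a = (r, s)`. -/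
def zSet {n : ℕ} (a : Fin n × Fin n) : Finset (DMB n) :=
  {Sum.inr (Sum.inr (a, 0)), Sum.inr (Sum.inr (a, 1))}

/-- The candidate sets `P_{(r,s)}` of the constructed 2-matching instance. -/
def Pdm {n : ℕ} (A1 A2 : Finset (Fin n × Fin n)) (a : Fin n × Fin n) :
    Finset (Finset (DMB n)) :=
  (if a ∈ A1 then {pqSet 0 a} else ∅) ∪ (if a ∈ A2 then {pqSet 1 a} else ∅) ∪ {zSet a}

/-- The weights of the constructed 2-matching instance: `0` on `{p^i_r, q^i_s}` and `1`
on `{z_{rs}, z'_{rs}}` when `(p_r,q_s) ∈ 𝒜₁ △ 𝒜₂`; `1` and `2` respectively when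
`(p_r,q_s) ∈ 𝒜₁ ∩ 𝒜₂`. -/
def wdm {n : ℕ} (A1 A2 : Finset (Fin n × Fin n)) (a : Fin n × Fin n)
    (j : Finset (DMB n)) : ℝ :=
  (if j = zSet a then 1 else 0) + (if a ∈ A1 ∧ a ∈ A2 then 1 else 0)

/-- A perfect matching: `n` pairs such that every `p_r` and every `q_s` occurs in
exactly one pair. -/
def IsPM {n : ℕ} (M : Finset (Fin n × Fin n)) : Prop :=
  M.card = n ∧ (∀ r : Fin n, ∃! s : Fin n, (r, s) ∈ M) ∧
    (∀ s : Fin n, ∃! r : Fin n, (r, s) ∈ M)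

/-!
Each pair of `M_i` takes its own copy `{p^i_r, q^i_s}`; since `M_i` is a perfect matching these
copies are pairwise disjoint, copies with different `i` never meet, and every other pair takes
its private `{z_{rs}, z'_{rs}}`. Each pair pays `1` if it lies in `𝒜₁ ∩ 𝒜₂` and another `1` if it
lies in no `M_i`, so `w(f) = |(𝒜₁ ∪ 𝒜₂) \ (M₁ ∪ M₂)| + |𝒜₁ ∩ 𝒜₂| = |𝒜₁ \ M₁| + |𝒜₂ \ M₂|`.
-/

open Finset

section Gadget

variable {n : ℕ}

lemma disjoint_pqSet_zSet (i : Fin 2) (a b : Fin n × Fin n) : Disjoint (pqSet i a) (zSet b) := by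
  simp [pqSet, zSet]

lemma pqSet_ne_zSet (i : Fin 2) (a b : Fin n × Fin n) : pqSet i a ≠ zSet b :=
  (disjoint_pqSet_zSet i a b).ne (by simp [pqSet])

lemma disjoint_zSet {a b : Fin n × Fin n} (h : a ≠ b) : Disjoint (zSet a) (zSet b) := by
  simp [zSet, h.symm]

lemma disjoint_pqSet_of_ne_index {i j : Fin 2} (h : i ≠ j) (a b : Fin n × Fin n) :
    Disjoint (pqSet i a) (pqSet j b) := by
  simp [pqSet, h.symm]

lemma disjoint_pqSet_of_ne_of_ne (i : Fin 2) {a b : Fin n × Fin n} (h₁ : a.1 ≠ b.1)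
    (h₂ : a.2 ≠ b.2) : Disjoint (pqSet i a) (pqSet i b) := by
  simp [pqSet, h₁.symm, h₂.symm]

end Gadget

namespace IsPM

variable {n : ℕ} {M : Finset (Fin n × Fin n)} {a b : Fin n × Fin n}

lemma eq_of_fst_eq (hM : IsPM M) (ha : a ∈ M) (hb : b ∈ M) (h : a.1 = b.1) : a = b := by
  obtain ⟨s, -, hs⟩ := hM.2.1 a.1
  have hb' : (a.1, b.2) ∈ M := h ▸ hb
  exact Prod.ext h ((hs a.2 ha).trans (hs b.2 hb').symm)

lemma eq_of_snd_eq (hM : IsPM M) (ha : a ∈ M) (hb : b ∈ M) (h : a.2 = b.2) : a = b := by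
  obtain ⟨r, -, hr⟩ := hM.2.2 a.2
  have hb' : (b.1, a.2) ∈ M := h ▸ hb
  exact Prod.ext ((hr a.1 ha).trans (hr b.1 hb').symm) h

lemma disjoint_pqSet (hM : IsPM M) (i : Fin 2) (ha : a ∈ M) (hb : b ∈ M) (hab : a ≠ b) :
    Disjoint (pqSet i a) (pqSet i b) :=
  disjoint_pqSet_of_ne_of_ne i (fun h ↦ hab (hM.eq_of_fst_eq ha hb h))
    (fun h ↦ hab (hM.eq_of_snd_eq ha hb h))

end IsPM

section MatchingAssignment

variable {n : ℕ} (M1 M2 : Finset (Fin n × Fin n))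

def matchingAssignment (a : Fin n × Fin n) : Finset (DMB n) :=
  if a ∈ M1 then pqSet 0 a else if a ∈ M2 then pqSet 1 a else zSet a

lemma matchingAssignment_eq_zSet_iff (a : Fin n × Fin n) :
    matchingAssignment M1 M2 a = zSet a ↔ a ∉ M1 ∧ a ∉ M2 := by
  unfold matchingAssignment
  split_ifs <;> simp_all [pqSet_ne_zSet]

variable {M1 M2}

lemma matchingAssignment_mem_Pdm {A1 A2 : Finset (Fin n × Fin n)} (hM1 : M1 ⊆ A1)
    (hM2 : M2 ⊆ A2) (a : Fin n × Fin n) : matchingAssignment M1 M2 a ∈ Pdm A1 A2 a := by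
  unfold matchingAssignment
  split_ifs with h1 h2
  · simp [Pdm, hM1 h1]
  · simp [Pdm, hM2 h2]
  · simp [Pdm]

lemma disjoint_matchingAssignment (hpm1 : IsPM M1) (hpm2 : IsPM M2) {a b : Fin n × Fin n}
    (hab : a ≠ b) : Disjoint (matchingAssignment M1 M2 a) (matchingAssignment M1 M2 b) := by
  unfold matchingAssignment
  split_ifs
  · exact hpm1.disjoint_pqSet 0 ‹_› ‹_› hab
  · exact disjoint_pqSet_of_ne_index (by decide) a b
  · exact disjoint_pqSet_zSet 0 a b
  · exact disjoint_pqSet_of_ne_index (by decide) a b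
  · exact hpm2.disjoint_pqSet 1 ‹_› ‹_› hab
  · exact disjoint_pqSet_zSet 1 a b
  · exact (disjoint_pqSet_zSet 0 b a).symm
  · exact (disjoint_pqSet_zSet 1 b a).symm
  · exact disjoint_zSet hab

variable (M1 M2)

lemma sum_wdm_matchingAssignment (A1 A2 : Finset (Fin n × Fin n)) :
    ∑ a ∈ A1 ∪ A2, wdm A1 A2 a (matchingAssignment M1 M2 a)
      = (#((A1 ∪ A2) \ (M1 ∪ M2)) : ℝ) + #(A1 ∩ A2) := by
  simp only [wdm, sum_add_distrib, sum_boole, matchingAssignment_eq_zSet_iff]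
  congr 3
  · ext a
    simp [not_or]
  · ext a
    simp only [mem_filter, mem_union, mem_inter]
    tauto

end MatchingAssignment

lemma card_sdiff_union_add_card_inter {α : Type*} [DecidableEq α] {A1 A2 M1 M2 : Finset α}
    (hM1 : M1 ⊆ A1) (hM2 : M2 ⊆ A2) (hdisj : Disjoint M1 M2) :
    #((A1 ∪ A2) \ (M1 ∪ M2)) + #(A1 ∩ A2) = #(A1 \ M1) + #(A2 \ M2) := by
  have hM : M1 ∪ M2 ⊆ A1 ∪ A2 := union_subset_union hM1 hM2
  have hMA := card_le_card hM
  have hM1A1 := card_le_card hM1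
  have hM2A2 := card_le_card hM2
  have hincl := card_union_add_card_inter A1 A2
  rw [card_union_of_disjoint hdisj] at hMA
  rw [card_sdiff_of_subset hM, card_sdiff_of_subset hM1, card_sdiff_of_subset hM2,
    card_union_of_disjoint hdisj]
  omega

theorem stmt_7_general {n : ℕ}
    (A1 A2 M1 M2 : Finset (Fin n × Fin n))
    (hM1 : M1 ⊆ A1) (hM2 : M2 ⊆ A2)
    (hpm1 : IsPM M1) (hpm2 : IsPM M2) (hdisj : M1 ∩ M2 = ∅)
    (f : Fin n × Fin n → Finset (DMB n))
    (hf : ∀ a, f a = if a ∈ M1 then pqSet 0 a else if a ∈ M2 then pqSet 1 a else zSet a) :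
    (∀ a ∈ A1 ∪ A2, f a ∈ Pdm A1 A2 a) ∧
    (∀ a₁ ∈ A1 ∪ A2, ∀ a₂ ∈ A1 ∪ A2, a₁ ≠ a₂ → f a₁ ∩ f a₂ = ∅) ∧
    ∑ a ∈ A1 ∪ A2, wdm A1 A2 a (f a) = ((A1 \ M1).card : ℝ) + ((A2 \ M2).card : ℝ) ∧
    ((A1 \ M1).card : ℝ) + ((A2 \ M2).card : ℝ) = (A1.card : ℝ) + (A2.card : ℝ) - 2 * n := by
  obtain rfl : f = matchingAssignment M1 M2 := funext hf
  refine ⟨fun a _ ↦ matchingAssignment_mem_Pdm hM1 hM2 a,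
    fun a₁ _ a₂ _ hne ↦ disjoint_iff_inter_eq_empty.mp (disjoint_matchingAssignment hpm1 hpm2 hne),
    ?_, ?_⟩
  · rw [sum_wdm_matchingAssignment]
    exact_mod_cast card_sdiff_union_add_card_inter hM1 hM2 (disjoint_iff_inter_eq_empty.mpr hdisj)
  · rw [card_sdiff_of_subset hM1, card_sdiff_of_subset hM2, Nat.cast_sub (card_le_card hM1),
      Nat.cast_sub (card_le_card hM2), hpm1.1, hpm2.1]
    ring

/-- from disjoint perfect matchings `M₁ ⊆ 𝒜₁`, `M₂ ⊆ 𝒜₂`, the assignment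
`f(r,s) = {p^i_r, q^i_s}` if `(p_r,q_s) ∈ M_i` and `f(r,s) = {z_{rs}, z'_{rs}}`
otherwise is a valid assignment of weight `|𝒜₁ \ M₁| + |𝒜₂ \ M₂| = |𝒜₁| + |𝒜₂| − 2n = t`. -/
theorem stmt_7 {n : ℕ} (hn : 0 < n)
    (A1 A2 M1 M2 : Finset (Fin n × Fin n))
    (hM1 : M1 ⊆ A1) (hM2 : M2 ⊆ A2)
    (hpm1 : IsPM M1) (hpm2 : IsPM M2) (hdisj : M1 ∩ M2 = ∅)
    (f : Fin n × Fin n → Finset (DMB n))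
    (hf : ∀ a, f a = if a ∈ M1 then pqSet 0 a else if a ∈ M2 then pqSet 1 a else zSet a) :
    (∀ a ∈ A1 ∪ A2, f a ∈ Pdm A1 A2 a) ∧
    (∀ a₁ ∈ A1 ∪ A2, ∀ a₂ ∈ A1 ∪ A2, a₁ ≠ a₂ → f a₁ ∩ f a₂ = ∅) ∧
    ∑ a ∈ A1 ∪ A2, wdm A1 A2 a (f a) = ((A1 \ M1).card : ℝ) + ((A2 \ M2).card : ℝ) ∧
    ((A1 \ M1).card : ℝ) + ((A2 \ M2).card : ℝ) = (A1.card : ℝ) + (A2.card : ℝ) - 2 * n :=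
  stmt_7_general A1 A2 M1 M2 hM1 hM2 hpm1 hpm2 hdisj f hf
end

section
/- In the K-MDP instance constructed from a 2-MDPAW instance, the normalization condition Σ_{j∈P'_a} e^{−w'_{a,j}} = 1 holds for every a ∈ A', every candidate set in P'_a has cardinality exactly K, and all weights w'_{a,j} are nonnegative. -/
/-
The new weights are `w + β` on the lifted pairs and `-log (1 - S_a)` on `j'_a`, where
`S_a = ∑_{j ∈ P_a} e^{-(w_{a,j} + β)} = e^{-β} ∑_{j ∈ P_a} e^{-w_{a,j}} < 1` by the choice of `β`.
So `e^{-w'}` sums to `S_a + (1 - S_a) = 1`, and `-log (1 - S_a) ≥ 0` because `0 ≤ 1 - S_a ≤ 1`.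
The lifted pairs have `2 + (K - 2) = K` elements and never meet the fresh set `j'_a`.
-/

/-- The ground set `B'` of the constructed K-MDP instance: the original `B`, the new
elements `b̃_{j,k}` (indexed by a subset `j` of `B` and `k`), and the new elements
`b̄_{a,k}` (indexed by `a ∈ A` and `k`). -/
abbrev BExt (A B : Type*) := B ⊕ ((Finset B × ℕ) ⊕ (A × ℕ))

/-- The candidate set `j ∪ {b̃_{j,3}, …, b̃_{j,K}}` obtained from `j ∈ P a`. -/
def extSet {A B : Type*} [DecidableEq A] [DecidableEq B] (K : ℕ) (j : Finset B) :
    Finset (BExt A B) :=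
  j.image Sum.inl ∪ (Finset.Icc 3 K).image (fun k => Sum.inr (Sum.inl (j, k)))

/-- The candidate set `j'_a = {b̄_{a,1}, …, b̄_{a,K}}`. -/
def barSet {A B : Type*} [DecidableEq A] [DecidableEq B] (K : ℕ) (a : A) :
    Finset (BExt A B) :=
  (Finset.Icc 1 K).image (fun k => Sum.inr (Sum.inr (a, k)))

/-- The candidate sets of the constructed K-MDP instance: the ground set `A'` is
`A ⊕ A` (`Sum.inl a` is the original `a`, `Sum.inr aᵢ` is `āᵢ`), with
`P'_{a} = {j ∪ {b̃_{j,3},…,b̃_{j,K}} : j ∈ P a} ∪ {j'_a}` and `P'_{ā} = {j'_a}`. -/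
def Pext {A B : Type*} [DecidableEq A] [DecidableEq B] (K : ℕ)
    (P : A → Finset (Finset B)) : A ⊕ A → Finset (Finset (BExt A B))
  | Sum.inl a => (P a).image (extSet K) ∪ {barSet K a}
  | Sum.inr a => {barSet K a}


section Pext

variable {A B : Type*} [DecidableEq A] [DecidableEq B] (K : ℕ)

lemma inl_mem_extSet_iff (j : Finset B) (b : B) :
    (Sum.inl b : BExt A B) ∈ extSet K j ↔ b ∈ j := by
  simp [extSet]

lemma extSet_injective : Function.Injective (extSet (A := A) (B := B) K) := by
  intro j₁ j₂ h
  ext b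
  rw [← inl_mem_extSet_iff (A := A) K, h, inl_mem_extSet_iff]

lemma card_extSet (hK : 2 ≤ K) {j : Finset B} (hj : j.card = 2) :
    (extSet (A := A) K j).card = K := by
  rw [extSet, Finset.card_union_of_disjoint, Finset.card_image_of_injective _ Sum.inl_injective,
    Finset.card_image_of_injective _ (fun k₁ k₂ h => by simpa using h), hj, Nat.card_Icc]
  · omega
  · simp [Finset.disjoint_left]

lemma card_barSet (a : A) : (barSet (B := B) K a).card = K := by
  rw [barSet, Finset.card_image_of_injective _ (fun k₁ k₂ h => by simpa using h), Nat.card_Icc]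
  omega

lemma barSet_ne_extSet (a : A) {j : Finset B} (hj : j.Nonempty) : barSet K a ≠ extSet K j := by
  intro h
  obtain ⟨b, hb⟩ := hj
  have hmem : (Sum.inl b : BExt A B) ∈ barSet K a := by
    rw [h, inl_mem_extSet_iff]
    exact hb
  simp [barSet] at hmem

variable (P : A → Finset (Finset B))

lemma sum_Pext_inl {M : Type*} [AddCommMonoid M] (a : A) (hP : ∀ j ∈ P a, j.Nonempty)
    (g : Finset (BExt A B) → M) :
    ∑ J ∈ Pext K P (Sum.inl a), g J = ∑ j ∈ P a, g (extSet K j) + g (barSet K a) := by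
  have hdisj : Disjoint ((P a).image (extSet K)) {barSet K a} := by
    simpa [Finset.disjoint_left] using fun j hj => (barSet_ne_extSet K a (hP j hj)).symm
  rw [Pext, Finset.sum_union hdisj, Finset.sum_singleton,
    Finset.sum_image fun _ _ _ _ h => extSet_injective K h]

lemma forall_mem_Pext {p : A ⊕ A → Finset (BExt A B) → Prop}
    (hext : ∀ a, ∀ j ∈ P a, p (Sum.inl a) (extSet K j))
    (hbar : ∀ a, p (Sum.inl a) (barSet K a)) (hbar' : ∀ a, p (Sum.inr a) (barSet K a)) :
    ∀ x, ∀ J ∈ Pext K P x, p x J := by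
  rintro (a | a) J hJ <;> simp only [Pext, Finset.mem_union, Finset.mem_image,
    Finset.mem_singleton] at hJ
  · obtain ⟨j, hj, rfl⟩ | rfl := hJ
    exacts [hext a j hj, hbar a]
  · exact hJ ▸ hbar' a

end Pext

lemma sum_exp_neg_add_lt_one {ι : Type*} {s : Finset ι} {f : ι → ℝ} {β : ℝ}
    (h : Real.log (∑ i ∈ s, Real.exp (-f i)) < β) : ∑ i ∈ s, Real.exp (-(f i + β)) < 1 :=
  calc ∑ i ∈ s, Real.exp (-(f i + β)) = (∑ i ∈ s, Real.exp (-f i)) * Real.exp (-β) := by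
        rw [Finset.sum_mul]
        simp only [neg_add, Real.exp_add]
    _ < Real.exp β * Real.exp (-β) := by
        gcongr
        exact Real.lt_exp_of_log_lt h
    _ = 1 := by rw [← Real.exp_add, add_neg_cancel, Real.exp_zero]

theorem stmt_10_general {A B : Type*} [DecidableEq A] [DecidableEq B]
    (K : ℕ) (hK : 2 ≤ K)
    (P : A → Finset (Finset B))
    (hP2 : ∀ a, ∀ j ∈ P a, j.card = 2)
    (w : A → Finset B → ℝ) (hw : ∀ a, ∀ j ∈ P a, 0 ≤ w a j)
    (β : ℝ) (hβ0 : 0 ≤ β)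
    (hβ : ∀ a, Real.log (∑ j ∈ P a, Real.exp (-(w a j))) < β)
    (w' : A ⊕ A → Finset (BExt A B) → ℝ)
    (hw'1 : ∀ a : A, ∀ j ∈ P a, w' (Sum.inl a) (extSet K j) = w a j + β)
    (hw'2 : ∀ a : A, w' (Sum.inl a) (barSet K a) =
      -Real.log (1 - ∑ j ∈ P a, Real.exp (-(w a j + β))))
    (hw'3 : ∀ a : A, w' (Sum.inr a) (barSet K a) = 0) :
    (∀ x : A ⊕ A, ∑ J ∈ Pext K P x, Real.exp (-(w' x J)) = 1) ∧
    (∀ x : A ⊕ A, ∀ J ∈ Pext K P x, J.card = K) ∧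
    (∀ x : A ⊕ A, ∀ J ∈ Pext K P x, 0 ≤ w' x J) := by
  have hS : ∀ a, ∑ j ∈ P a, Real.exp (-(w a j + β)) < 1 := fun a => sum_exp_neg_add_lt_one (hβ a)
  have hS₀ : ∀ a, 0 ≤ ∑ j ∈ P a, Real.exp (-(w a j + β)) :=
    fun a => Finset.sum_nonneg fun _ _ => (Real.exp_pos _).le
  have hne : ∀ a, ∀ j ∈ P a, j.Nonempty :=
    fun a j hj => Finset.card_pos.mp (by rw [hP2 a j hj]; norm_num)
  refine ⟨?_, forall_mem_Pext K P (fun a j hj => card_extSet K hK (hP2 a j hj))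
      (fun a => card_barSet K a) (fun a => card_barSet K a), forall_mem_Pext K P ?_ ?_ ?_⟩
  · rintro (a | a)
    · rw [sum_Pext_inl K P a (hne a), Finset.sum_congr rfl fun j hj => by rw [hw'1 a j hj],
        hw'2, neg_neg, Real.exp_log (by linarith [hS a]), add_sub_cancel]
    · simp [Pext, hw'3]
  · intro a j hj
    rw [hw'1 a j hj]
    linarith [hw a j hj]
  · intro a
    rw [hw'2, neg_nonneg]
    exact Real.log_nonpos (by linarith [hS a]) (by linarith [hS₀ a])
  · intro a
    rw [hw'3]

/-- in the K-MDP instance constructed from a 2-MDPAW instance, the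
weights are normalized (`∑_{J ∈ P'_x} e^{−w'_{x,J}} = 1` for every `x ∈ A'`), every
candidate set has cardinality exactly `K`, and all weights are nonnegative. -/
theorem stmt_10 {A B : Type*} [DecidableEq A] [DecidableEq B]
    (K : ℕ) (hK : 2 ≤ K)
    (P : A → Finset (Finset B))
    (hPne : ∀ a, (P a).Nonempty)
    (hP2 : ∀ a, ∀ j ∈ P a, j.card = 2)
    (w : A → Finset B → ℝ) (hw : ∀ a, ∀ j ∈ P a, 0 ≤ w a j)
    (β : ℝ) (hβ0 : 0 ≤ β)
    (hβ : ∀ a, Real.log (∑ j ∈ P a, Real.exp (-(w a j))) < β)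
    (w' : A ⊕ A → Finset (BExt A B) → ℝ)
    (hw'1 : ∀ a : A, ∀ j ∈ P a, w' (Sum.inl a) (extSet K j) = w a j + β)
    (hw'2 : ∀ a : A, w' (Sum.inl a) (barSet K a) =
      -Real.log (1 - ∑ j ∈ P a, Real.exp (-(w a j + β))))
    (hw'3 : ∀ a : A, w' (Sum.inr a) (barSet K a) = 0) :
    (∀ x : A ⊕ A, ∑ J ∈ Pext K P x, Real.exp (-(w' x J)) = 1) ∧
    (∀ x : A ⊕ A, ∀ J ∈ Pext K P x, J.card = K) ∧
    (∀ x : A ⊕ A, ∀ J ∈ Pext K P x, 0 ≤ w' x J) :=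
  stmt_10_general K hK P hP2 w hw β hβ0 hβ w' hw'1 hw'2 hw'3
end

section
/- The 2-MDPAW instance admits a valid assignment f with w(f) ≤ t if and only if the constructed K-MDP instance admits a valid assignment f' with w'(f') ≤ t' = t + n_A·β. (Here a valid assignment of an instance is a function g with g(a) ∈ P_a, resp. P'_a, for all a in the ground set and g(a₁) ∩ g(a₂) = ∅ for a₁ ≠ a₂, and its weight is the sum of the weights of the chosen candidate sets.) -/
/-!
Each new element `āᵢ` has the single candidate `j'_{aᵢ}`, so in a valid K-MDP assignment it occupies
that set and forces `aᵢ` onto some extended pair `j ∪ {b̃_{j,3}, …, b̃_{j,K}}` with `j ∈ P aᵢ`. Since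
the pairs are nonempty, the extended pairs are disjoint exactly when the pairs are, so valid
assignments of the two instances correspond; every extended pair costs `β` more and every `j'_{aᵢ}`
costs nothing for `āᵢ`, so the weights differ by exactly `n_A·β`.
-/

section Reduction

open Function

variable {A B : Type*} [DecidableEq A] [DecidableEq B] {K : ℕ}

lemma disjoint_extSet_barSet (j : Finset B) (a : A) : Disjoint (extSet K j) (barSet K a) := by
  simp [Finset.disjoint_left, extSet, barSet]

lemma disjoint_barSet_barSet {a a' : A} (h : a ≠ a') :
    Disjoint (barSet (B := B) K a) (barSet K a') := by
  simp only [Finset.disjoint_left, barSet, Finset.mem_image]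
  rintro _ ⟨k, -, rfl⟩ ⟨k', -, hk⟩
  simp_all

lemma barSet_nonempty (hK : 1 ≤ K) (a : A) : (barSet (B := B) K a).Nonempty :=
  ⟨Sum.inr (Sum.inr (a, 1)), by simp [barSet, hK]⟩

lemma disjoint_extSet_extSet_iff {j j' : Finset B} (hj : j.Nonempty) :
    Disjoint (extSet (A := A) K j) (extSet K j') ↔ Disjoint j j' := by
  constructor
  · intro h
    refine Finset.disjoint_left.2 fun b hb hb' => Finset.disjoint_left.1 h
      (show (Sum.inl b : BExt A B) ∈ extSet K j by simp [extSet, hb]) (by simp [extSet, hb'])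
  · intro h
    have hne : j ≠ j' := by rintro rfl; simp_all
    simp only [Finset.disjoint_left, extSet, Finset.mem_union, Finset.mem_image]
    rintro _ (⟨b, hb, rfl⟩ | ⟨k, -, rfl⟩) (⟨b', hb', hbb'⟩ | ⟨k', -, hkk'⟩)
    · exact Finset.disjoint_left.1 h hb (by simp_all)
    all_goals simp_all

def extAssignment (K : ℕ) (f : A → Finset B) : A ⊕ A → Finset (BExt A B) :=
  Sum.elim (fun a => extSet K (f a)) (barSet K)

lemma extAssignment_mem_Pext {P : A → Finset (Finset B)} {f : A → Finset B}
    (hf : ∀ a, f a ∈ P a) : ∀ x, extAssignment K f x ∈ Pext K P x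
  | .inl a => by simp [extAssignment, Pext, Finset.mem_image_of_mem _ (hf a)]
  | .inr a => by simp [extAssignment, Pext]

lemma pairwise_disjoint_extAssignment_iff {f : A → Finset B} (hf : ∀ a, (f a).Nonempty) :
    Pairwise (Disjoint on extAssignment K f) ↔ Pairwise (Disjoint on f) := by
  refine ⟨fun h a a' haa' => ?_, fun h => ?_⟩
  · exact (disjoint_extSet_extSet_iff (hf a)).1 (h (Sum.inl_injective.ne haa'))
  rintro (a | a) (a' | a') haa'
  · exact (disjoint_extSet_extSet_iff (hf a)).2 (h (by simpa using haa'))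
  · exact disjoint_extSet_barSet _ _
  · exact (disjoint_extSet_barSet _ _).symm
  · exact disjoint_barSet_barSet (by simpa using haa')

lemma exists_eq_extAssignment (hK : 1 ≤ K) {P : A → Finset (Finset B)}
    {f' : A ⊕ A → Finset (BExt A B)} (hf' : ∀ x, f' x ∈ Pext K P x)
    (hd : Pairwise (Disjoint on f')) :
    ∃ f : A → Finset B, (∀ a, f a ∈ P a) ∧ f' = extAssignment K f := by
  have hbar : ∀ a, f' (.inr a) = barSet K a := fun a => by simpa [Pext] using hf' (.inr a)
  have hext : ∀ a, ∃ j ∈ P a, extSet K j = f' (.inl a) := fun a => by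
    have h := hf' (.inl a)
    simp only [Pext, Finset.mem_union, Finset.mem_image, Finset.mem_singleton] at h
    refine h.resolve_right fun hb => (barSet_nonempty (B := B) hK a).ne_empty ?_
    simpa [onFun, hb, hbar] using hd (Sum.inl_ne_inr (a := a) (b := a))
  choose f hfP hf using hext
  refine ⟨f, hfP, funext ?_⟩
  rintro (a | a)
  · exact (hf a).symm
  · exact hbar a

lemma sum_weight_extAssignment [Fintype A] {P : A → Finset (Finset B)}
    {w : A → Finset B → ℝ} {β : ℝ} {w' : A ⊕ A → Finset (BExt A B) → ℝ}
    (hw'1 : ∀ a : A, ∀ j ∈ P a, w' (Sum.inl a) (extSet K j) = w a j + β)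
    (hw'3 : ∀ a : A, w' (Sum.inr a) (barSet K a) = 0) {f : A → Finset B}
    (hf : ∀ a, f a ∈ P a) :
    ∑ x, w' x (extAssignment K f x) = ∑ a, w a (f a) + Fintype.card A * β := by
  simp [Fintype.sum_sum_type, extAssignment, hw'1 _ _ (hf _), hw'3, Finset.sum_add_distrib]

end Reduction

theorem stmt_11_general {A B : Type*} [Fintype A] [DecidableEq A] [DecidableEq B]
    (K : ℕ) (hK : 2 ≤ K)
    (P : A → Finset (Finset B))
    (hP2 : ∀ a, ∀ j ∈ P a, j.card = 2)
    (w : A → Finset B → ℝ)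
    (t : ℝ) (β : ℝ)
    (w' : A ⊕ A → Finset (BExt A B) → ℝ)
    (hw'1 : ∀ a : A, ∀ j ∈ P a, w' (Sum.inl a) (extSet K j) = w a j + β)
    (hw'3 : ∀ a : A, w' (Sum.inr a) (barSet K a) = 0) :
    (∃ f : A → Finset B, (∀ a, f a ∈ P a) ∧
        (∀ a₁ a₂ : A, a₁ ≠ a₂ → f a₁ ∩ f a₂ = ∅) ∧
        ∑ a, w a (f a) ≤ t) ↔
    (∃ f' : A ⊕ A → Finset (BExt A B), (∀ x, f' x ∈ Pext K P x) ∧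
        (∀ x y : A ⊕ A, x ≠ y → f' x ∩ f' y = ∅) ∧
        ∑ x, w' x (f' x) ≤ t + (Fintype.card A : ℝ) * β) := by
  simp only [← Finset.disjoint_iff_inter_eq_empty]
  have hne {f : A → Finset B} (hf : ∀ a, f a ∈ P a) a : (f a).Nonempty := by
    simp [← Finset.card_pos, hP2 a _ (hf a)]
  constructor
  · rintro ⟨f, hf, hd, ht⟩
    refine ⟨extAssignment K f, extAssignment_mem_Pext hf,
      (pairwise_disjoint_extAssignment_iff (hne hf)).2 hd, ?_⟩
    rw [sum_weight_extAssignment hw'1 hw'3 hf]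
    linarith
  · rintro ⟨f', hf', hd', ht'⟩
    obtain ⟨f, hf, rfl⟩ := exists_eq_extAssignment (by omega) hf' hd'
    refine ⟨f, hf, (pairwise_disjoint_extAssignment_iff (hne hf)).1 hd', ?_⟩
    rwa [sum_weight_extAssignment hw'1 hw'3 hf, add_le_add_iff_right] at ht'

/-- the 2-MDPAW instance admits a valid assignment of weight at most `t`
iff the constructed K-MDP instance admits a valid assignment of weight at most
`t' = t + n_A·β`. -/
theorem stmt_11 {A B : Type*} [Fintype A] [DecidableEq A] [DecidableEq B]
    (K : ℕ) (hK : 2 ≤ K)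
    (P : A → Finset (Finset B))
    (hPne : ∀ a, (P a).Nonempty)
    (hP2 : ∀ a, ∀ j ∈ P a, j.card = 2)
    (w : A → Finset B → ℝ) (hw : ∀ a, ∀ j ∈ P a, 0 ≤ w a j)
    (t : ℝ) (β : ℝ) (hβ0 : 0 ≤ β)
    (hβ : ∀ a, Real.log (∑ j ∈ P a, Real.exp (-(w a j))) < β)
    (w' : A ⊕ A → Finset (BExt A B) → ℝ)
    (hw'1 : ∀ a : A, ∀ j ∈ P a, w' (Sum.inl a) (extSet K j) = w a j + β)
    (hw'2 : ∀ a : A, w' (Sum.inl a) (barSet K a) =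
      -Real.log (1 - ∑ j ∈ P a, Real.exp (-(w a j + β))))
    (hw'3 : ∀ a : A, w' (Sum.inr a) (barSet K a) = 0) :
    (∃ f : A → Finset B, (∀ a, f a ∈ P a) ∧
        (∀ a₁ a₂ : A, a₁ ≠ a₂ → f a₁ ∩ f a₂ = ∅) ∧
        ∑ a, w a (f a) ≤ t) ↔
    (∃ f' : A ⊕ A → Finset (BExt A B), (∀ x, f' x ∈ Pext K P x) ∧
        (∀ x y : A ⊕ A, x ≠ y → f' x ∩ f' y = ∅) ∧
        ∑ x, w' x (f' x) ≤ t + (Fintype.card A : ℝ) * β) :=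
  stmt_11_general K hK P hP2 w t β w' hw'1 hw'3
end
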